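/- arXiv:1310.2510 — 4 statements merged into one kernel-verified Lean document; each statement's English description precedes it below -/
import Mathlib

section
/- Let ω₁, ω₂, ω₃, ω₄ be unit vectors in ℝ³ with ω₁ + ω₂ + ω₃ + ω₄ = 0. Then |ω₁+ω₂|·|ω₃+ω₄| + |ω₁+ω₃|·|ω₂+ω₄| + |ω₁+ω₄|·|ω₂+ω₃| = 4. -/
/-! Since the four vectors sum to zero, `ω₃ + ω₄ = -(ω₁ + ω₂)` and similarly for the other two
pairings, so each product is a square `‖ω₁ + ωⱼ‖²`. Expanding these squares, the cross terms add
up to `2 ⟪ω₁, ω₂ + ω₃ + ω₄⟫ = -2 ‖ω₁‖²`, leaving `‖ω₁‖² + ‖ω₂‖² + ‖ω₃‖² + ‖ω₄‖² = 4`. -/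

open RealInnerProductSpace

theorem sum_norm_add_sq_eq_sum_norm_sq_of_add_eq_zero {E : Type*} [NormedAddCommGroup E]
    [InnerProductSpace ℝ E] {a b c d : E} (h : a + b + c + d = 0) :
    ‖a + b‖ ^ 2 + ‖a + c‖ ^ 2 + ‖a + d‖ ^ 2 = ‖a‖ ^ 2 + ‖b‖ ^ 2 + ‖c‖ ^ 2 + ‖d‖ ^ 2 := by
  have hbcd : b + c + d = -a := eq_neg_of_add_eq_zero_left (by rw [← h]; abel)
  have hcross : ⟪a, b⟫ + ⟪a, c⟫ + ⟪a, d⟫ = -‖a‖ ^ 2 := by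
    rw [← inner_add_right, ← inner_add_right, hbcd, inner_neg_right, real_inner_self_eq_norm_sq]
  rw [norm_add_sq_real, norm_add_sq_real, norm_add_sq_real]
  linarith

theorem sphere_quadrilinear_identity
    (ω₁ ω₂ ω₃ ω₄ : EuclideanSpace ℝ (Fin 3))
    (h₁ : ‖ω₁‖ = 1) (h₂ : ‖ω₂‖ = 1) (h₃ : ‖ω₃‖ = 1) (h₄ : ‖ω₄‖ = 1)
    (hsum : ω₁ + ω₂ + ω₃ + ω₄ = 0) :
    ‖ω₁ + ω₂‖ * ‖ω₃ + ω₄‖ + ‖ω₁ + ω₃‖ * ‖ω₂ + ω₄‖ + ‖ω₁ + ω₄‖ * ‖ω₂ + ω₃‖ = 4 := by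
  have h34 : ω₃ + ω₄ = -(ω₁ + ω₂) := eq_neg_of_add_eq_zero_left (by rw [← hsum]; abel)
  have h24 : ω₂ + ω₄ = -(ω₁ + ω₃) := eq_neg_of_add_eq_zero_left (by rw [← hsum]; abel)
  have h23 : ω₂ + ω₃ = -(ω₁ + ω₄) := eq_neg_of_add_eq_zero_left (by rw [← hsum]; abel)
  rw [h34, h24, h23, norm_neg, norm_neg, norm_neg, ← sq, ← sq, ← sq,
    sum_norm_add_sq_eq_sum_norm_sq_of_add_eq_zero hsum, h₁, h₂, h₃, h₄]
  norm_num
end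

section
/- Let f be a nonnegative measurable function on S² satisfying f(ω)·f(ν) = f(-ω)·f(-ν) for σ×σ-almost every (ω, ν) ∈ S² × S², and suppose f is not almost everywhere zero. Then f(ω) = f(-ω) for σ-almost every ω ∈ S². -/
/-!
Integrating the product identity over `S² × S²` gives `(∫ f)² = (∫ f ∘ neg)²`, so the two
integrals agree; integrating it in the second variable only then gives
`f ω · ∫ f = f (-ω) · ∫ f` for almost every `ω`, and `∫ f` can be cancelled since it is
finite and nonzero.
-/

open Metric MeasureTheory

namespace MeasureTheory

variable {α : Type*} [MeasurableSpace α] {μ : Measure α} [SFinite μ]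

theorem lintegral_eq_of_ae_mul_eq_mul_prod {f g : α → ENNReal} (hf : Measurable f)
    (hg : Measurable g) (h : ∀ᵐ p ∂μ.prod μ, f p.1 * f p.2 = g p.1 * g p.2) :
    ∫⁻ x, f x ∂μ = ∫⁻ x, g x ∂μ := by
  have hsq : (∫⁻ x, f x ∂μ) ^ 2 = (∫⁻ x, g x ∂μ) ^ 2 := by
    rw [sq, sq, ← lintegral_prod_mul hf.aemeasurable hf.aemeasurable,
      ← lintegral_prod_mul hg.aemeasurable hg.aemeasurable]
    exact lintegral_congr_ae h
  exact (ENNReal.pow_right_strictMono two_ne_zero).injective hsq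

theorem ae_eq_of_ae_mul_eq_mul_prod {f g : α → ENNReal} (hf : Measurable f)
    (hg : Measurable g) (h : ∀ᵐ p ∂μ.prod μ, f p.1 * f p.2 = g p.1 * g p.2)
    (h_ne_zero : ∫⁻ x, f x ∂μ ≠ 0) (h_ne_top : ∫⁻ x, f x ∂μ ≠ ⊤) :
    f =ᵐ[μ] g := by
  have h_int_eq := lintegral_eq_of_ae_mul_eq_mul_prod hf hg h
  filter_upwards [Measure.ae_ae_of_ae_prod h] with x hx
  have hx_int : f x * ∫⁻ y, f y ∂μ = g x * ∫⁻ y, f y ∂μ := by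
    rw [← lintegral_const_mul _ hf, h_int_eq, ← lintegral_const_mul _ hg]
    exact lintegral_congr_ae hx
  exact (ENNReal.mul_left_inj h_ne_zero h_ne_top).1 hx_int

theorem ae_eq_of_ae_mul_eq_mul_prod_of_nonneg {f g : α → ℝ} (hf : Measurable f)
    (hg : Measurable g) (hf_nonneg : ∀ x, 0 ≤ f x) (hg_nonneg : ∀ x, 0 ≤ g x)
    (h : ∀ᵐ p ∂μ.prod μ, f p.1 * f p.2 = g p.1 * g p.2)
    (hf_int : Integrable f μ) (hf_ne : ¬ f =ᵐ[μ] 0) :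
    f =ᵐ[μ] g := by
  have h_ofReal : ∀ᵐ p ∂μ.prod μ, ENNReal.ofReal (f p.1) * ENNReal.ofReal (f p.2) =
      ENNReal.ofReal (g p.1) * ENNReal.ofReal (g p.2) := by
    filter_upwards [h] with p hp
    rw [← ENNReal.ofReal_mul (hf_nonneg _), ← ENNReal.ofReal_mul (hg_nonneg _), hp]
  have h_ne_zero : ∫⁻ x, ENNReal.ofReal (f x) ∂μ ≠ 0 := by
    rw [Ne, lintegral_eq_zero_iff hf.ennreal_ofReal]
    refine fun h_zero ↦ hf_ne ?_
    filter_upwards [h_zero] with x hx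
    exact le_antisymm (ENNReal.ofReal_eq_zero.1 hx) (hf_nonneg x)
  have h_ne_top : ∫⁻ x, ENNReal.ofReal (f x) ∂μ ≠ ⊤ :=
    (lintegral_ofReal_ne_top_iff_integrable hf.aestronglyMeasurable
      (Filter.Eventually.of_forall hf_nonneg)).2 hf_int
  filter_upwards [ae_eq_of_ae_mul_eq_mul_prod hf.ennreal_ofReal hg.ennreal_ofReal h_ofReal
    h_ne_zero h_ne_top] with x hx
  exact (ENNReal.ofReal_eq_ofReal_iff (hf_nonneg x) (hg_nonneg x)).1 hx

end MeasureTheory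

theorem antipodal_symmetry_from_product_identity
    (f : sphere (0 : EuclideanSpace ℝ (Fin 3)) 1 → ℝ)
    (σ : Measure (sphere (0 : EuclideanSpace ℝ (Fin 3)) 1))
    (hσ : σ = (volume : Measure (EuclideanSpace ℝ (Fin 3))).toSphere)
    (hf_meas : Measurable f) (hf_nonneg : ∀ ω, 0 ≤ f ω)
    (hf_int : Integrable f σ)
    (hprod : ∀ᵐ p ∂(σ.prod σ), f p.1 * f p.2 = f (-p.1) * f (-p.2))
    (hf_ne : ¬ (f =ᵐ[σ] 0)) :
    ∀ᵐ ω ∂σ, f ω = f (-ω) := by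
  have : IsFiniteMeasure σ := hσ ▸ inferInstance
  exact ae_eq_of_ae_mul_eq_mul_prod_of_nonneg hf_meas (hf_meas.comp measurable_neg) hf_nonneg
    (fun ω ↦ hf_nonneg (-ω)) hprod hf_int hf_ne
end

section
/- For every integer k ≥ 0, ∫_{-1}^{1} P_k(t)/√(2-2t) dt = 2/(2k+1), where P_k is the Legendre polynomial of degree k. -/
open Polynomial

/-- The Legendre polynomial of degree `k`, via Rodrigues' formula. -/
noncomputable def legendre (k : ℕ) : Polynomial ℝ :=
  (1 / (2 ^ k * k.factorial) : ℝ) • derivative^[k] ((X ^ 2 - 1) ^ k)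

/-!
Substituting `t = 1 - 2x` turns the integral into `∫₀¹ Pₖ(1 - 2x) x^(-1/2) dx`, and
`Pₖ(1 - 2x) = (1/k!) Dᵏ (xᵏ (1 - x)ᵏ)` by Rodrigues' formula. The weighted moment
`M_a(P) = ∫₀¹ P(x) x^(a-1) dx` satisfies the integration by parts rule
`M_{a+1}(P') = P(1) - a M_a(P)`, which stays meaningful for `a < 0` once `M_a` is defined on
monomials by `M_a(xⁿ) = 1/(n + a)`. Applying it `k` times to `Dᵏ (xᵏ (1 - x)ᵏ)`, whose lower
derivatives vanish at `1`, moves all derivatives onto the weight; the factor `xᵏ` then shifts the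
exponent back, leaving the Beta value `M_{1/2}((1 - x)ᵏ) = k! / ((1/2)(3/2)⋯(k + 1/2))`. The
Pochhammer symbols telescope to `2 / (2k + 1)`.
-/

open Nat

namespace Polynomial

/-- `mellinMoment a P = ∫₀¹ P(x) x^(a-1) dx` when `0 < a` (`integral_eval_mul_rpow`); it is
defined through its values `1 / (n + a)` on monomials so that it makes sense for every `a`. -/
noncomputable def mellinMoment (a : ℝ) : ℝ[X] →ₗ[ℝ] ℝ :=
  lsum fun n => ((n : ℝ) + a)⁻¹ • LinearMap.id

theorem mellinMoment_monomial (a : ℝ) (n : ℕ) (c : ℝ) :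
    mellinMoment a (monomial n c) = c * ((n : ℝ) + a)⁻¹ := by
  simp [mellinMoment, mul_comm]

theorem mellinMoment_X_pow_mul (a : ℝ) (k : ℕ) (P : ℝ[X]) :
    mellinMoment a (X ^ k * P) = mellinMoment (a + k) P := by
  induction P using Polynomial.induction_on' with
  | add p q hp hq => rw [mul_add, map_add, map_add, hp, hq]
  | monomial n c =>
    rw [X_pow_mul_monomial, mellinMoment_monomial, mellinMoment_monomial]
    push_cast
    ring_nf

theorem mellinMoment_derivative {a : ℝ} (ha : ∀ n : ℕ, (n : ℝ) + a ≠ 0) (P : ℝ[X]) :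
    mellinMoment (a + 1) (derivative P) = P.eval 1 - a * mellinMoment a P := by
  induction P using Polynomial.induction_on' with
  | add p q hp hq => rw [derivative_add, map_add, map_add, hp, hq, eval_add]; ring
  | monomial n c =>
    rw [derivative_monomial, mellinMoment_monomial, mellinMoment_monomial, eval_monomial,
      one_pow, mul_one]
    rcases n with _ | n
    · have h0 := ha 0
      simp only [CharP.cast_eq_zero, zero_add, mul_zero, zero_mul, ne_eq] at h0 ⊢
      field_simp
      ring
    · have hn : ((n + 1 : ℕ) : ℝ) + a ≠ 0 := ha (n + 1)
      rw [add_tsub_cancel_right,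
        show (n : ℝ) + (a + 1) = ((n + 1 : ℕ) : ℝ) + a by push_cast; ring]
      field_simp
      push_cast
      ring

theorem mellinMoment_iterate_derivative {a : ℝ} (ha : ∀ n : ℕ, (n : ℝ) + a ≠ 0) {k : ℕ}
    {P : ℝ[X]} (hP : (X - 1) ^ k ∣ P) :
    mellinMoment (a + k) (derivative^[k] P) =
      (-1) ^ k * (ascPochhammer ℝ k).eval a * mellinMoment a P := by
  induction k with
  | zero => simp
  | succ k ih =>
    have hroot : (derivative^[k] P).eval 1 = 0 := by
      have hdvd := pow_sub_dvd_iterate_derivative_of_pow_dvd k hP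
      rwa [Nat.add_sub_cancel_left, pow_one, ← C_1, dvd_iff_isRoot] at hdvd
    have ha' : ∀ n : ℕ, (n : ℝ) + (a + k) ≠ 0 := fun n => by
      simpa [add_assoc, add_comm (k : ℝ)] using ha (n + k)
    rw [Function.iterate_succ_apply', Nat.cast_succ, ← add_assoc, mellinMoment_derivative ha',
      hroot, ih ((pow_dvd_pow _ k.le_succ).trans hP), ascPochhammer_succ_eval]
    ring

theorem mellinMoment_one_sub_X_pow {a : ℝ} (ha : 0 < a) (k : ℕ) :
    mellinMoment a ((1 - X) ^ k) = k ! / (ascPochhammer ℝ (k + 1)).eval a := by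
  induction k generalizing a with
  | zero => rw [pow_zero, ← monomial_zero_one, mellinMoment_monomial]; simp
  | succ k ih =>
    have hA := ascPochhammer_pos (k + 1) a ha
    have hB := ascPochhammer_pos (k + 1) (a + 1) (by linarith)
    have hleft :
        (ascPochhammer ℝ (k + 2)).eval a = a * (ascPochhammer ℝ (k + 1)).eval (a + 1) := by
      simp [ascPochhammer_succ_left, eval_comp]
    rw [show (1 - X : ℝ[X]) ^ (k + 1) = (1 - X) ^ k - X ^ 1 * (1 - X) ^ k by ring, map_sub,
      mellinMoment_X_pow_mul, ih ha, ih (by linarith), hleft, Nat.cast_one, Nat.factorial_succ]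
    rw [ascPochhammer_succ_eval] at hleft
    field_simp
    push_cast at hleft ⊢
    linear_combination (-k ! : ℝ) * hleft

theorem iterate_derivative_comp_of_derivative_eq_C {R : Type*} [CommSemiring R] {q : R[X]}
    {c : R} (hq : derivative q = C c) (p : R[X]) (k : ℕ) :
    derivative^[k] (p.comp q) = C (c ^ k) * (derivative^[k] p).comp q := by
  induction k with
  | zero => simp
  | succ k ih =>
    rw [Function.iterate_succ_apply', ih, derivative_C_mul, derivative_comp, hq,
      Function.iterate_succ_apply', pow_succ, C_mul]
    ring

theorem ascPochhammer_eval_one_sub_sub {R : Type*} [CommRing R] (r : R) (k : ℕ) :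
    (ascPochhammer R k).eval (1 - r - k) = (-1) ^ k * (ascPochhammer R k).eval r := by
  rw [show 1 - r - k = -(r + k - 1) by ring, ascPochhammer_eval_neg_eq_descPochhammer,
    descPochhammer_eval_eq_ascPochhammer]
  ring_nf

end Polynomial

theorem legendre_comp_one_sub_two_mul_X (k : ℕ) :
    (legendre k).comp (1 - 2 * X) = (k ! : ℝ)⁻¹ • derivative^[k] (X ^ k * (1 - X) ^ k) := by
  have hlin : derivative (1 - 2 * X : ℝ[X]) = C (-2) := by
    simp [derivative_mul, ← map_ofNat C]
  have hsq :
      ((X ^ 2 - 1 : ℝ[X]) ^ k).comp (1 - 2 * X) = C ((-4 : ℝ) ^ k) * (X ^ k * (1 - X) ^ k) := by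
    simp only [pow_comp, sub_comp, X_comp, one_comp, C_pow, map_neg]
    rw [← mul_pow, ← mul_pow]
    congr 1
    simp only [map_ofNat]
    ring
  have h := iterate_derivative_comp_of_derivative_eq_C hlin ((X ^ 2 - 1 : ℝ[X]) ^ k) k
  rw [hsq, iterate_derivative_C_mul] at h
  have hcomp : (derivative^[k] ((X ^ 2 - 1 : ℝ[X]) ^ k)).comp (1 - 2 * X) =
      C (2 ^ k) * derivative^[k] (X ^ k * (1 - X) ^ k) := by
    refine mul_left_cancel₀ (C_ne_zero.mpr (pow_ne_zero k (by norm_num : (-2 : ℝ) ≠ 0))) ?_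
    rw [← h, ← mul_assoc, ← C_mul, ← mul_pow (-2 : ℝ) 2 k,
      show (-2 : ℝ) * 2 = -4 by norm_num]
  rw [legendre, smul_comp, hcomp, smul_eq_C_mul, smul_eq_C_mul, ← mul_assoc, ← C_mul]
  congr 2
  field_simp

theorem integral_eval_mul_rpow {a : ℝ} (ha : 0 < a) (P : ℝ[X]) :
    ∫ x in (0 : ℝ)..1, P.eval x * x ^ (a - 1) = mellinMoment a P := by
  have hint (Q : ℝ[X]) :
      IntervalIntegrable (fun x => Q.eval x * x ^ (a - 1)) MeasureTheory.volume 0 1 :=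
    (intervalIntegral.intervalIntegrable_rpow' (by linarith)).continuousOn_mul
      Q.continuous.continuousOn
  induction P using Polynomial.induction_on' with
  | add p q hp hq =>
    simp only [eval_add, add_mul]
    rw [intervalIntegral.integral_add (hint p) (hint q), hp, hq, map_add]
  | monomial n c =>
    have hpow : ∀ x ∈ Set.uIoc (0 : ℝ) 1,
        (monomial n c).eval x * x ^ (a - 1) = c * x ^ ((n + a) - 1) := by
      intro x hx
      rw [Set.uIoc_of_le zero_le_one] at hx
      rw [eval_monomial, add_sub_assoc, Real.rpow_add hx.1, Real.rpow_natCast]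
      ring
    have hna : (0 : ℝ) < n + a := by positivity
    rw [intervalIntegral.integral_congr_ae (Filter.Eventually.of_forall hpow),
      intervalIntegral.integral_const_mul, integral_rpow (Or.inl (by linarith)),
      mellinMoment_monomial]
    simp [hna.ne']

theorem integral_div_sqrt_two_sub_two_mul (f : ℝ → ℝ) :
    ∫ t in (-1 : ℝ)..1, f t / √(2 - 2 * t) =
      ∫ x in (0 : ℝ)..1, f (1 - 2 * x) * x ^ ((1 / 2 : ℝ) - 1) := by
  have h := intervalIntegral.integral_comp_sub_mul (fun t => f t / √(2 - 2 * t))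
    (a := 0) (b := 1) (two_ne_zero' ℝ) 1
  norm_num at h
  rw [show ∫ t in (-1 : ℝ)..1, f t / √(2 - 2 * t) =
      2 * ∫ x in (0 : ℝ)..1, f (1 - 2 * x) / √(2 - 2 * (1 - 2 * x)) by linarith,
    ← intervalIntegral.integral_const_mul]
  refine intervalIntegral.integral_congr fun x hx => ?_
  rw [Set.uIcc_of_le zero_le_one] at hx
  have hsqrt : √(2 - 2 * (1 - 2 * x)) = 2 * √x := by
    rw [show 2 - 2 * (1 - 2 * x) = 2 ^ 2 * x by ring, Real.sqrt_mul (by positivity),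
      Real.sqrt_sq zero_le_two]
  rw [hsqrt, show (1 / 2 : ℝ) - 1 = -(1 / 2) by norm_num, Real.rpow_neg hx.1,
    ← Real.sqrt_eq_rpow]
  ring

theorem legendre_integral_inv_sqrt (k : ℕ) :
    ∫ t in (-1 : ℝ)..1, (legendre k).eval t / Real.sqrt (2 - 2 * t) =
      2 / (2 * (k : ℝ) + 1) := by
  have hhalf : ∀ n : ℕ, (n : ℝ) + (1 / 2 - k) ≠ 0 := fun n h => by
    have h2 : (2 * ((n : ℤ) - k) : ℝ) = -1 := by push_cast; linarith
    exact (by omega : 2 * ((n : ℤ) - k) ≠ -1) (by exact_mod_cast h2)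
  have hdvd : (X - 1) ^ k ∣ (X ^ k * (1 - X) ^ k : ℝ[X]) :=
    (pow_dvd_pow_of_dvd (dvd_sub_comm.mp dvd_rfl) k).mul_left _
  calc ∫ t in (-1 : ℝ)..1, (legendre k).eval t / √(2 - 2 * t)
      = mellinMoment (1 / 2) ((legendre k).comp (1 - 2 * X)) := by
        rw [integral_div_sqrt_two_sub_two_mul, ← integral_eval_mul_rpow (by norm_num)]
        simp
    _ = (k ! : ℝ)⁻¹ * mellinMoment (1 / 2 - k + k) (derivative^[k] (X ^ k * (1 - X) ^ k)) := by
        rw [legendre_comp_one_sub_two_mul_X, map_smul, smul_eq_mul, sub_add_cancel]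
    _ = (k ! : ℝ)⁻¹ * ((ascPochhammer ℝ k).eval (1 / 2) *
          (k ! / (ascPochhammer ℝ (k + 1)).eval (1 / 2))) := by
        rw [mellinMoment_iterate_derivative hhalf hdvd, mellinMoment_X_pow_mul, sub_add_cancel,
          mellinMoment_one_sub_X_pow (by norm_num), show (1 / 2 : ℝ) - k = 1 - 1 / 2 - k by ring,
          ascPochhammer_eval_one_sub_sub, ← mul_assoc ((-1 : ℝ) ^ k), ← mul_pow]
        norm_num
    _ = 2 / (2 * k + 1) := by
        have hpoch := ascPochhammer_pos k (1 / 2 : ℝ) (by norm_num)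
        rw [ascPochhammer_succ_eval]
        field_simp
        ring
end

section
/- For every integer k ≥ 1, the integral Λ_k := ∫_{-1}^{1} √(2-2t)·P_k(t) dt is strictly negative. In fact, (2k+1)·Λ_k = 2/(2k+3) - 2/(2k-1). -/
open Polynomial

/-!
Write `Λ p = ∫_{-1}^{1} √(2 - 2t) p(t) dt`. Integrating by parts against `(2 - 2t)^{3/2}`,
whose derivative is `-3 √(2 - 2t)`, gives `2 Λ((X - 1) p') + 3 Λ p = 8 p(-1)`.
In Rodrigues' formula `D^i (X² - 1)^k = (X - 1)^(k-i) s_i`, where `s_0 = (X + 1)^k`,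
`s_{i+1} = (k - i) s_i + (X - 1) s_i'` and `s_i(-1) = 0` for `i < k`; so each derivative
multiplies `Λ` by `k - i - 3/2`. The same identity gives
`(2m + 5) Λ((X + 1)^(m+1)) = 4 (m + 1) Λ((X + 1)^m)`, and the resulting product telescopes to
`Λ P_k = -8 / ((2k - 1)(2k + 1)(2k + 3))`.
-/

open Finset

noncomputable def sqrtWeightIntegral : ℝ[X] →ₗ[ℝ] ℝ where
  toFun p := ∫ t in (-1 : ℝ)..1, √(2 - 2 * t) * p.eval t
  map_add' p q := by
    simp only [eval_add, mul_add]
    exact intervalIntegral.integral_add (Continuous.intervalIntegrable (by fun_prop) _ _)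
      (Continuous.intervalIntegrable (by fun_prop) _ _)
  map_smul' a p := by
    simp only [eval_smul, smul_eq_mul, mul_left_comm _ a, intervalIntegral.integral_const_mul,
      RingHom.id_apply]

theorem sqrtWeightIntegral_apply (p : ℝ[X]) :
    sqrtWeightIntegral p = ∫ t in (-1 : ℝ)..1, √(2 - 2 * t) * p.eval t :=
  rfl

theorem Real.rpow_three_halves_eq_mul_sqrt {x : ℝ} (hx : 0 ≤ x) :
    x ^ (3 / 2 : ℝ) = x * √x := by
  rw [show (3 / 2 : ℝ) = 1 + 1 / 2 by norm_num, Real.rpow_add' hx (by norm_num), Real.rpow_one,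
    Real.sqrt_eq_rpow]

theorem hasDerivAt_two_sub_two_mul_rpow_three_halves (t : ℝ) :
    HasDerivAt (fun t : ℝ => (2 - 2 * t) ^ (3 / 2 : ℝ)) (-3 * √(2 - 2 * t)) t := by
  have hlin : HasDerivAt (fun t : ℝ => 2 - 2 * t) (-2) t := by
    simpa using ((hasDerivAt_id t).const_mul (2 : ℝ)).const_sub 2
  refine ((Real.hasDerivAt_rpow_const (p := 3 / 2) (Or.inr (by norm_num))).comp t
    hlin).congr_deriv ?_
  rw [Real.sqrt_eq_rpow]
  norm_num
  ring

theorem two_mul_sqrtWeightIntegral_X_sub_one_mul_derivative_add (p : ℝ[X]) :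
    2 * sqrtWeightIntegral ((X - 1) * derivative p) + 3 * sqrtWeightIntegral p =
      8 * p.eval (-1) := by
  have hderiv : ∀ t ∈ Set.uIcc (-1 : ℝ) 1,
      HasDerivAt (fun t => (2 - 2 * t) ^ (3 / 2 : ℝ) * p.eval t)
        (-(2 * (√(2 - 2 * t) * ((X - 1) * derivative p).eval t) +
          3 * (√(2 - 2 * t) * p.eval t))) t := by
    intro t ht
    have ht1 : 0 ≤ 2 - 2 * t := by
      rw [Set.uIcc_of_le (by norm_num)] at ht
      linarith [ht.2]
    refine ((hasDerivAt_two_sub_two_mul_rpow_three_halves t).mul (p.hasDerivAt t)).congr_deriv ?_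
    rw [Real.rpow_three_halves_eq_mul_sqrt ht1]
    simp only [eval_mul, eval_sub, eval_X, eval_one]
    ring
  have hftc := intervalIntegral.integral_eq_sub_of_hasDerivAt hderiv
    (Continuous.intervalIntegrable (by fun_prop) _ _)
  have hleft : (2 - 2 * (-1 : ℝ)) ^ (3 / 2 : ℝ) = 8 := by
    rw [Real.rpow_three_halves_eq_mul_sqrt (by norm_num)]
    norm_num [show (4 : ℝ) = 2 ^ 2 by norm_num]
  have hright : (2 - 2 * 1 : ℝ) ^ (3 / 2 : ℝ) = 0 := by norm_num
  rw [intervalIntegral.integral_neg, intervalIntegral.integral_add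
    ((Continuous.intervalIntegrable (by fun_prop) _ _).const_mul _)
    ((Continuous.intervalIntegrable (by fun_prop) _ _).const_mul _),
    intervalIntegral.integral_const_mul, intervalIntegral.integral_const_mul, hleft, hright] at hftc
  rw [sqrtWeightIntegral_apply, sqrtWeightIntegral_apply]
  linarith

section Rodrigues

variable {R : Type*} [CommRing R]

theorem derivative_X_sub_one_pow_succ_mul (n : ℕ) (s : R[X]) :
    derivative ((X - 1) ^ (n + 1) * s) =
      (X - 1) ^ n * (((n + 1 : ℕ) : R[X]) * s + (X - 1) * derivative s) := by
  rw [derivative_mul, derivative_pow]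
  simp only [derivative_sub, derivative_X, derivative_one, sub_zero, add_tsub_cancel_right]
  rw [C_eq_natCast]
  push_cast
  ring

variable (R) in
noncomputable def rodriguesCofactor (k : ℕ) : ℕ → R[X]
  | 0 => (X + 1) ^ k
  | i + 1 => ((k - i : ℕ) : R[X]) * rodriguesCofactor k i +
      (X - 1) * derivative (rodriguesCofactor k i)

theorem X_sub_one_pow_mul_rodriguesCofactor {k i : ℕ} (hi : i ≤ k) :
    (X - 1) ^ (k - i) * rodriguesCofactor R k i = derivative^[i] ((X ^ 2 - 1) ^ k) := by
  induction i with
  | zero => rw [rodriguesCofactor, Nat.sub_zero, Function.iterate_zero_apply, ← mul_pow]; ring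
  | succ i ih =>
    obtain ⟨n, hn⟩ : ∃ n, k - i = n + 1 := ⟨k - (i + 1), by omega⟩
    rw [Function.iterate_succ_apply', ← ih (by omega), hn, derivative_X_sub_one_pow_succ_mul,
      rodriguesCofactor, ← hn, show k - (i + 1) = n by omega]

theorem eval_neg_one_rodriguesCofactor [IsDomain R] [CharZero R] {k i : ℕ} (hi : i < k) :
    (rodriguesCofactor R k i).eval (-1) = 0 := by
  have hdvd : (X + 1) ^ (k - i) ∣ derivative^[i] ((X ^ 2 - 1 : R[X]) ^ k) :=
    pow_sub_dvd_iterate_derivative_of_pow_dvd i ⟨(X - 1) ^ k, by rw [← mul_pow]; ring⟩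
  rw [← X_sub_one_pow_mul_rodriguesCofactor hi.le] at hdvd
  have h0 := eval_eq_zero_of_dvd_of_eval_eq_zero hdvd
    (by simp [zero_pow (Nat.sub_ne_zero_of_lt hi)] : ((X + 1) ^ (k - i) : R[X]).eval (-1) = 0)
  simpa [show (-1 - 1 : R) = -2 by ring] using h0

end Rodrigues

theorem sqrtWeightIntegral_one : sqrtWeightIntegral 1 = 8 / 3 := by
  have h := two_mul_sqrtWeightIntegral_X_sub_one_mul_derivative_add 1
  simp only [derivative_one, mul_zero, map_zero, eval_one] at h
  linarith

theorem sqrtWeightIntegral_X_add_one_pow_succ (m : ℕ) :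
    sqrtWeightIntegral ((X + 1) ^ (m + 1)) =
      4 * (m + 1) / (2 * m + 5) * sqrtWeightIntegral ((X + 1) ^ m) := by
  have h := two_mul_sqrtWeightIntegral_X_sub_one_mul_derivative_add ((X + 1) ^ (m + 1))
  have hsplit : (X - 1) * derivative ((X + 1 : ℝ[X]) ^ (m + 1)) =
      (m + 1 : ℝ) • (X + 1) ^ (m + 1) - (2 * (m + 1) : ℝ) • (X + 1) ^ m := by
    rw [derivative_pow, smul_eq_C_mul, smul_eq_C_mul]
    simp only [map_add, map_mul, map_ofNat, map_natCast, map_one, Nat.cast_add, Nat.cast_one,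
      add_tsub_cancel_right, derivative_X, derivative_one, add_zero, mul_one]
    ring
  rw [hsplit, map_sub, map_smul, map_smul] at h
  simp only [eval_pow, eval_add, eval_X, eval_one, neg_add_cancel, smul_eq_mul,
    zero_pow (Nat.succ_ne_zero m)] at h
  field_simp
  linarith

theorem sqrtWeightIntegral_rodriguesCofactor {k i : ℕ} (hi : i ≤ k) :
    sqrtWeightIntegral (rodriguesCofactor ℝ k i) =
      (∏ j ∈ range i, (((k - j : ℕ) : ℝ) - 3 / 2)) * sqrtWeightIntegral ((X + 1) ^ k) := by
  induction i with
  | zero => simp [rodriguesCofactor]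
  | succ i ih =>
    have hibp := two_mul_sqrtWeightIntegral_X_sub_one_mul_derivative_add (rodriguesCofactor ℝ k i)
    rw [eval_neg_one_rodriguesCofactor (by omega)] at hibp
    rw [rodriguesCofactor, map_add, ← nsmul_eq_mul, map_nsmul, nsmul_eq_mul, prod_range_succ,
      mul_right_comm, ← ih (by omega)]
    linarith

theorem sqrtWeightIntegral_iterate_derivative (k : ℕ) :
    sqrtWeightIntegral (derivative^[k] ((X ^ 2 - 1) ^ k)) =
      (∏ j ∈ range k, ((j : ℝ) - 1 / 2)) * sqrtWeightIntegral ((X + 1) ^ k) := by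
  rw [← X_sub_one_pow_mul_rodriguesCofactor le_rfl, Nat.sub_self, pow_zero, one_mul,
    sqrtWeightIntegral_rodriguesCofactor le_rfl, ← prod_range_reflect]
  congr 1
  refine prod_congr rfl fun j hj => ?_
  rw [show k - (k - 1 - j) = j + 1 by have := mem_range.mp hj; omega]
  push_cast
  ring

theorem prod_div_mul_sqrtWeightIntegral_X_add_one_pow (k : ℕ) :
    (∏ j ∈ range k, ((j : ℝ) - 1 / 2)) / (2 ^ k * k.factorial) *
        sqrtWeightIntegral ((X + 1) ^ k) =
      -8 / ((2 * k - 1) * (2 * k + 1) * (2 * k + 3)) := by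
  induction k with
  | zero => norm_num [sqrtWeightIntegral_one]
  | succ k ih =>
    have h1 : (2 * k - 1 : ℝ) ≠ 0 := sub_ne_zero.mpr (by norm_cast; omega)
    rw [prod_range_succ, pow_succ, Nat.factorial_succ, sqrtWeightIntegral_X_add_one_pow_succ]
    set P := ∏ j ∈ range k, ((j : ℝ) - 1 / 2)
    calc P * (k - 1 / 2) / (2 ^ k * 2 * ((k + 1 : ℕ) * k.factorial : ℕ)) *
          (4 * (k + 1) / (2 * k + 5) * sqrtWeightIntegral ((X + 1) ^ k))
        = P / (2 ^ k * k.factorial) * sqrtWeightIntegral ((X + 1) ^ k) *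
            ((2 * k - 1) / (2 * k + 5)) := by
          push_cast
          field_simp
          ring
      _ = _ := by
          rw [ih]
          push_cast
          rw [show 2 * ((k : ℝ) + 1) - 1 = 2 * k + 1 by ring]
          field_simp
          ring

theorem sqrtWeightIntegral_legendre (k : ℕ) :
    sqrtWeightIntegral (legendre k) = -8 / ((2 * k - 1) * (2 * k + 1) * (2 * k + 3)) := by
  rw [legendre, map_smul, sqrtWeightIntegral_iterate_derivative, smul_eq_mul,
    ← prod_div_mul_sqrtWeightIntegral_X_add_one_pow]
  ring

theorem legendre_sqrt_integral_neg (k : ℕ) (hk : 1 ≤ k) :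
    (∫ t in (-1 : ℝ)..1, Real.sqrt (2 - 2 * t) * (legendre k).eval t) < 0 ∧
    (2 * (k : ℝ) + 1) * (∫ t in (-1 : ℝ)..1, Real.sqrt (2 - 2 * t) * (legendre k).eval t) =
      2 / (2 * (k : ℝ) + 3) - 2 / (2 * (k : ℝ) - 1) := by
  rw [← sqrtWeightIntegral_apply, sqrtWeightIntegral_legendre]
  have hk' : (0 : ℝ) < 2 * k - 1 := sub_pos.mpr (by norm_cast; omega)
  refine ⟨div_neg_of_neg_of_pos (by norm_num) (by positivity), ?_⟩
  field_simp
  ring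
end
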